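/- Let Z ∈ ℂ^{n1×n2×n3} admit a skinny transformed tensor SVD Z = U ⋄ S ⋄ Vᴴ with transformed multi-rank (r_1,…,r_{n3}), and suppose Z satisfies the tensor incoherence conditions with parameter μ ≥ 1. Then ‖U ⋄ Vᴴ‖_{∞,2} ≤ √(μ (Σ_{t=1}^{n3} r_t) / n_(2)). -/

import Mathlib

open scoped BigOperators ComplexConjugate
open MeasureTheory Matrix

noncomputable section

/-- A third-order complex tensor. -/
abbrev Tensor (n1 n2 n3 : ℕ) : Type := Fin n1 → Fin n2 → Fin n3 → ℂ

namespace Tensor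

variable {n1 n2 n3 n4 r : ℕ}

/-- The `t`-th frontal slice of the transformed tensor `Φ[A]`. -/
def slice (Φ : Matrix (Fin n3) (Fin n3) ℂ) (A : Tensor n1 n2 n3) (t : Fin n3) :
    Matrix (Fin n1) (Fin n2) ℂ :=
  Matrix.of fun i j => ∑ k, Φ t k * A i j k

/-- Reconstruct a tensor from its transformed frontal slices (inverse transform `Φᴴ[·]`). -/
def unslice (Φ : Matrix (Fin n3) (Fin n3) ℂ)
    (M : Fin n3 → Matrix (Fin n1) (Fin n2) ℂ) : Tensor n1 n2 n3 :=
  fun i j k => ∑ t, (starRingEnd ℂ) (Φ t k) * M t i j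

/-- The Φ-product `A ⋄ B`. -/
def tprod (Φ : Matrix (Fin n3) (Fin n3) ℂ) (A : Tensor n1 n2 n3) (B : Tensor n2 n4 n3) :
    Tensor n1 n4 n3 :=
  unslice Φ fun t => slice Φ A t * slice Φ B t

/-- The conjugate transpose `Aᴴ` with respect to `Φ`. -/
def tconj (Φ : Matrix (Fin n3) (Fin n3) ℂ) (A : Tensor n1 n2 n3) : Tensor n2 n1 n3 :=
  unslice Φ fun t => (slice Φ A t)ᴴ

/-- Frobenius norm of a tensor. -/
def frob (A : Tensor n1 n2 n3) : ℝ :=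
  Real.sqrt (∑ i, ∑ j, ∑ k, Complex.normSq (A i j k))

/-- Entrywise inner product `⟨A, B⟩ = Σ conj(A) B`. -/
def tinner (A B : Tensor n1 n2 n3) : ℂ :=
  ∑ i, ∑ j, ∑ k, (starRingEnd ℂ) (A i j k) * B i j k

/-- `‖A‖_∞`, the max modulus of the entries. -/
def inftyNorm (A : Tensor n1 n2 n3) : ℝ :=
  ⨆ i, ⨆ j, ⨆ k, ‖A i j k‖

/-- `‖A‖_{∞,2}`. -/
def infty2Norm (A : Tensor n1 n2 n3) : ℝ :=
  max (⨆ i : Fin n1, Real.sqrt (∑ b, ∑ k, Complex.normSq (A i b k)))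
      (⨆ j : Fin n2, Real.sqrt (∑ a, ∑ k, Complex.normSq (A a j k)))

/-- The weighted norm `‖A‖_{∞,w}` for a weight vector `w`. -/
def inftyWNorm (w : Fin n3 → ℝ) (A : Tensor n1 n2 n3) : ℝ :=
  max (⨆ i : Fin n1, Real.sqrt (∑ b, ∑ k, (w k) ^ 2 * Complex.normSq (A i b k)))
      (⨆ j : Fin n2, Real.sqrt (∑ a, ∑ k, (w k) ^ 2 * Complex.normSq (A a j k)))

/-- Spectral norm of a complex matrix (ℓ²→ℓ² operator norm). -/
def specNormM {m n : ℕ} (M : Matrix (Fin m) (Fin n) ℂ) : ℝ :=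
  ‖LinearMap.toContinuousLinearMap (Matrix.toEuclideanLin M)‖

/-- Nuclear norm of a complex matrix: the sum of its singular values. -/
def nuclearNormM {m n : ℕ} (M : Matrix (Fin m) (Fin n) ℂ) : ℝ :=
  ∑ i, Real.sqrt ((Matrix.isHermitian_conjTranspose_mul_self M).eigenvalues i)

/-- Tensor spectral norm: max of spectral norms of transformed frontal slices. -/
def specNorm (Φ : Matrix (Fin n3) (Fin n3) ℂ) (A : Tensor n1 n2 n3) : ℝ :=
  ⨆ t, specNormM (slice Φ A t)

/-- Transformed tensor nuclear norm. -/
def ttnn (Φ : Matrix (Fin n3) (Fin n3) ℂ) (A : Tensor n1 n2 n3) : ℝ :=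
  ∑ t, nuclearNormM (slice Φ A t)

/-- The sampling projection `P_Ω`. -/
def projOmega (Ω : Set (Fin n1 × Fin n2 × Fin n3)) (A : Tensor n1 n2 n3) :
    Tensor n1 n2 n3 :=
  fun i j k => Ω.indicator (fun p => A p.1 p.2.1 p.2.2) (i, j, k)

/-- The column-basis tensor `e_ik ∈ ℂ^{n×1×n3}`. -/
def colBasis {n n3 : ℕ} (i : Fin n) (k : Fin n3) : Tensor n 1 n3 :=
  fun a _ c => if a = i ∧ c = k then 1 else 0

/-- The unit tensor `E_ijk`. -/
def unitTensor (i : Fin n1) (j : Fin n2) (k : Fin n3) : Tensor n1 n2 n3 :=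
  fun a b c => if a = i ∧ b = j ∧ c = k then 1 else 0

/-- The orthogonal projection `P_T` onto the subspace `T` determined by `U, V`. -/
def projT (Φ : Matrix (Fin n3) (Fin n3) ℂ) (U : Tensor n1 r n3) (V : Tensor n2 r n3)
    (X : Tensor n1 n2 n3) : Tensor n1 n2 n3 :=
  tprod Φ (tprod Φ U (tconj Φ U)) X + tprod Φ X (tprod Φ V (tconj Φ V))
    - tprod Φ (tprod Φ (tprod Φ U (tconj Φ U)) X) (tprod Φ V (tconj Φ V))

/-- `P_{T⊥}(X) = X - P_T(X)`. -/
def projTperp (Φ : Matrix (Fin n3) (Fin n3) ℂ) (U : Tensor n1 r n3) (V : Tensor n2 r n3)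
    (X : Tensor n1 n2 n3) : Tensor n1 n2 n3 :=
  X - projT Φ U V X

/-- Operator norm of a map on tensors, w.r.t. the Frobenius norm. -/
def opNorm (L : Tensor n1 n2 n3 → Tensor n1 n2 n3) : ℝ :=
  sSup ((fun X => frob (L X)) '' {X | frob X ≤ 1})

/-- A skinny transformed tensor SVD `Z = U ⋄ S ⋄ Vᴴ`. -/
structure SkinnySVD (Φ : Matrix (Fin n3) (Fin n3) ℂ) (Z : Tensor n1 n2 n3) (r : ℕ)
    (U : Tensor n1 r n3) (S : Tensor r r n3) (V : Tensor n2 r n3) : Prop where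
  factor : Z = tprod Φ (tprod Φ U S) (tconj Φ V)
  U_orth : ∀ t, (slice Φ U t)ᴴ * slice Φ U t = 1
  V_orth : ∀ t, (slice Φ V t)ᴴ * slice Φ V t = 1
  S_offdiag : ∀ t i j, i ≠ j → slice Φ S t i j = 0
  S_diag_real_nonneg : ∀ t i, (slice Φ S t i i).im = 0 ∧ 0 ≤ (slice Φ S t i i).re

/-- The tensor incoherence conditions with parameter μ. -/
def Incoherent (Φ : Matrix (Fin n3) (Fin n3) ℂ) (Z : Tensor n1 n2 n3)
    (U : Tensor n1 r n3) (V : Tensor n2 r n3) (μ : ℝ) : Prop :=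
  (∀ (i : Fin n1) (k : Fin n3),
      (frob (tprod Φ (tconj Φ U) (colBasis i k))) ^ 2
        ≤ μ * (∑ t, ((slice Φ Z t).rank : ℝ)) / (n1 * n3)) ∧
  (∀ (j : Fin n2) (k : Fin n3),
      (frob (tprod Φ (tconj Φ V) (colBasis j k))) ^ 2
        ≤ μ * (∑ t, ((slice Φ Z t).rank : ℝ)) / (n2 * n3))

/-- Bernoulli measure on `Bool` with success probability ρ. -/
def berMeasure (ρ : ℝ) : Measure Bool :=
  ρ.toNNReal • Measure.dirac true + (1 - ρ).toNNReal • Measure.dirac false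

instance (ρ : ℝ) : IsFiniteMeasure (berMeasure ρ) := by
  unfold berMeasure; infer_instance

/-- The i.i.d. Bernoulli sampling model `Ω ~ Ber(ρ)`. -/
def berPi (n1 n2 n3 : ℕ) (ρ : ℝ) : Measure ((Fin n1 × Fin n2 × Fin n3) → Bool) :=
  Measure.pi fun _ => berMeasure ρ

/-- The random set `Ω` determined by a Bernoulli sample. -/
def omegaSet {n1 n2 n3 : ℕ} (ω : (Fin n1 × Fin n2 × Fin n3) → Bool) :
    Set (Fin n1 × Fin n2 × Fin n3) := {p | ω p = true}

end Tensor

open Tensor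
/-! Since Φ is unitary, the transform preserves the ℓ² norm of every tube, so the squared norm
of the `i`-th horizontal slice of `U ⋄ Vᴴ` is `∑ₜ ‖row i of Φ[U]⁽ᵗ⁾ Φ[V]⁽ᵗ⁾ᴴ‖²`, which equals
`∑ₜ ‖row i of Φ[U]⁽ᵗ⁾‖²` because `Φ[V]⁽ᵗ⁾` has orthonormal columns. The same tube identity and the
unit rows of Φ show that this is also `∑ₖ ‖Uᴴ ⋄ e_ik‖_F²`, which incoherence bounds by
`n3 · μR / (n1 n3) = μR / n1 ≤ μR / n_(2)`. Columns are handled symmetrically with `Vᴴ ⋄ e_jk`. -/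

open Complex

namespace Matrix

variable {l m n : Type*}

theorem conjTranspose_mul_self_apply_self_eq_sum_normSq [Fintype m] (M : Matrix m n ℂ) (j : n) :
    (Mᴴ * M) j j = ((∑ a, normSq (M a j) : ℝ) : ℂ) := by
  push_cast
  simp [mul_apply, normSq_eq_conj_mul_self]

theorem sum_normSq_mul_apply_of_conjTranspose_mul_self_eq_one [Fintype l] [Fintype m]
    [DecidableEq l] {A : Matrix m l ℂ} (hA : Aᴴ * A = 1) (B : Matrix l n ℂ) (j : n) :
    ∑ a, normSq ((A * B) a j) = ∑ c, normSq (B c j) := by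
  have h : ((A * B)ᴴ * (A * B)) j j = (Bᴴ * B) j j := by
    rw [conjTranspose_mul, Matrix.mul_assoc, ← Matrix.mul_assoc Aᴴ, hA, Matrix.one_mul]
  simp only [conjTranspose_mul_self_apply_self_eq_sum_normSq] at h
  exact_mod_cast h

theorem sum_normSq_mul_conjTranspose_apply_of_conjTranspose_mul_self_eq_one [Fintype l]
    [Fintype n] [DecidableEq l]
    (A : Matrix m l ℂ) {B : Matrix n l ℂ} (hB : Bᴴ * B = 1) (i : m) :
    ∑ b, normSq ((A * Bᴴ) i b) = ∑ c, normSq (A i c) := by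
  have hBA : B * Aᴴ = (A * Bᴴ)ᴴ := by rw [conjTranspose_mul, conjTranspose_conjTranspose]
  calc ∑ b, normSq ((A * Bᴴ) i b) = ∑ b, normSq ((B * Aᴴ) b i) := by simp [hBA]
    _ = ∑ c, normSq (A i c) := by
        simp [sum_normSq_mul_apply_of_conjTranspose_mul_self_eq_one hB]

theorem sum_normSq_apply_eq_one_of_mem_unitaryGroup [Fintype m] [DecidableEq m]
    {Φ : Matrix m m ℂ} (hΦ : Φ ∈ unitaryGroup m ℂ) (t : m) : ∑ k, normSq (Φ t k) = 1 := by
  have hΦ' : Φ * Φᴴ = 1 := mem_unitaryGroup_iff.mp hΦ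
  have h := conjTranspose_mul_self_apply_self_eq_sum_normSq Φᴴ t
  rw [conjTranspose_conjTranspose, hΦ', one_apply_eq] at h
  simpa [star_def] using (show ∑ a, normSq (Φᴴ a t) = 1 by exact_mod_cast h.symm)

end Matrix

namespace Tensor

variable {n n1 n2 n3 n4 r : ℕ} {Φ : Matrix (Fin n3) (Fin n3) ℂ}

theorem slice_unslice (hΦ : Φ ∈ unitaryGroup (Fin n3) ℂ)
    (M : Fin n3 → Matrix (Fin n1) (Fin n2) ℂ) (t : Fin n3) :
    slice Φ (unslice Φ M) t = M t := by
  ext i j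
  calc slice Φ (unslice Φ M) t i j = ∑ s, (Φ * Φᴴ) t s * M s i j := by
        simp only [slice, unslice, of_apply, mul_apply, conjTranspose_apply, star_def,
          Finset.mul_sum, Finset.sum_mul, mul_assoc]
        exact Finset.sum_comm
    _ = M t i j := by
        have hΦ' : Φ * Φᴴ = 1 := mem_unitaryGroup_iff.mp hΦ
        simp [hΦ', one_apply]

theorem slice_tprod (hΦ : Φ ∈ unitaryGroup (Fin n3) ℂ)
    (A : Tensor n1 n2 n3) (B : Tensor n2 n4 n3) (t : Fin n3) :
    slice Φ (tprod Φ A B) t = slice Φ A t * slice Φ B t :=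
  slice_unslice hΦ _ t

theorem slice_tconj (hΦ : Φ ∈ unitaryGroup (Fin n3) ℂ) (A : Tensor n1 n2 n3) (t : Fin n3) :
    slice Φ (tconj Φ A) t = (slice Φ A t)ᴴ :=
  slice_unslice hΦ _ t

theorem sum_normSq_slice_apply (hΦ : Φ ∈ unitaryGroup (Fin n3) ℂ) (A : Tensor n1 n2 n3)
    (i : Fin n1) (j : Fin n2) :
    ∑ t, normSq (slice Φ A t i j) = ∑ k, normSq (A i j k) :=
  -- the tube `(A i j ·)` as a one-column matrix; multiplying it by `Φ` gives the transformed tube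
  sum_normSq_mul_apply_of_conjTranspose_mul_self_eq_one (mem_unitaryGroup_iff'.mp hΦ)
    (Matrix.of fun k (_ : Unit) => A i j k) ()

theorem frob_sq (A : Tensor n1 n2 n3) : frob A ^ 2 = ∑ i, ∑ j, ∑ k, normSq (A i j k) :=
  Real.sq_sqrt <| Finset.sum_nonneg fun _ _ => Finset.sum_nonneg fun _ _ =>
    Finset.sum_nonneg fun _ _ => normSq_nonneg _

theorem slice_colBasis (i : Fin n) (k t : Fin n3) (a : Fin n) (b : Fin 1) :
    slice Φ (colBasis i k) t a b = if a = i then Φ t k else 0 := by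
  by_cases h : a = i <;> simp [slice, colBasis, h]

theorem slice_tprod_tconj_colBasis (hΦ : Φ ∈ unitaryGroup (Fin n3) ℂ) (W : Tensor n r n3)
    (i : Fin n) (k t : Fin n3) (c : Fin r) (b : Fin 1) :
    slice Φ (tprod Φ (tconj Φ W) (colBasis i k)) t c b = conj (slice Φ W t i c) * Φ t k := by
  simp [slice_tprod hΦ, slice_tconj hΦ, mul_apply, slice_colBasis]

theorem frob_tprod_tconj_colBasis_sq (hΦ : Φ ∈ unitaryGroup (Fin n3) ℂ) (W : Tensor n r n3)
    (i : Fin n) (k : Fin n3) :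
    frob (tprod Φ (tconj Φ W) (colBasis i k)) ^ 2
      = ∑ t, (∑ c, normSq (slice Φ W t i c)) * normSq (Φ t k) := by
  simp_rw [frob_sq, ← sum_normSq_slice_apply hΦ, slice_tprod_tconj_colBasis hΦ, normSq_mul,
    normSq_conj, Finset.univ_unique, Finset.sum_singleton, Finset.sum_mul]
  exact Finset.sum_comm

theorem sum_frob_tprod_tconj_colBasis_sq (hΦ : Φ ∈ unitaryGroup (Fin n3) ℂ)
    (W : Tensor n r n3) (i : Fin n) :
    ∑ k, frob (tprod Φ (tconj Φ W) (colBasis i k)) ^ 2 = ∑ t, ∑ c, normSq (slice Φ W t i c) := by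
  simp_rw [frob_tprod_tconj_colBasis_sq hΦ]
  rw [Finset.sum_comm]
  simp [← Finset.mul_sum, sum_normSq_apply_eq_one_of_mem_unitaryGroup hΦ]

theorem sum_normSq_slice_row_le_of_incoherent {ρ : ℝ} (hρ : 0 ≤ ρ)
    (hΦ : Φ ∈ unitaryGroup (Fin n3) ℂ) {W : Tensor n r n3}
    (hW : ∀ i k, frob (tprod Φ (tconj Φ W) (colBasis i k)) ^ 2 ≤ ρ / (n * n3)) (i : Fin n) :
    ∑ t, ∑ c, normSq (slice Φ W t i c) ≤ ρ / n := by
  rw [← sum_frob_tprod_tconj_colBasis_sq hΦ]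
  calc ∑ k, frob (tprod Φ (tconj Φ W) (colBasis i k)) ^ 2
      ≤ ∑ _k : Fin n3, ρ / (n * n3) := Finset.sum_le_sum fun k _ => hW i k
    _ = n3 * (ρ / n / n3) := by simp [div_div]
    _ ≤ ρ / n := by
        rcases Nat.eq_zero_or_pos n3 with rfl | h3
        · simpa using div_nonneg hρ n.cast_nonneg
        · rw [mul_div_cancel₀ _ (by positivity)]

theorem sum_normSq_tprod_tconj_row (hΦ : Φ ∈ unitaryGroup (Fin n3) ℂ) (U : Tensor n1 r n3)
    {V : Tensor n2 r n3} (hV : ∀ t, (slice Φ V t)ᴴ * slice Φ V t = 1) (i : Fin n1) :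
    ∑ b, ∑ k, normSq (tprod Φ U (tconj Φ V) i b k) = ∑ t, ∑ c, normSq (slice Φ U t i c) := by
  simp_rw [← sum_normSq_slice_apply hΦ, slice_tprod hΦ, slice_tconj hΦ]
  rw [Finset.sum_comm]
  exact Finset.sum_congr rfl fun t _ =>
    sum_normSq_mul_conjTranspose_apply_of_conjTranspose_mul_self_eq_one _ (hV t) i

theorem sum_normSq_tprod_tconj_col (hΦ : Φ ∈ unitaryGroup (Fin n3) ℂ) {U : Tensor n1 r n3}
    (hU : ∀ t, (slice Φ U t)ᴴ * slice Φ U t = 1) (V : Tensor n2 r n3) (j : Fin n2) :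
    ∑ a, ∑ k, normSq (tprod Φ U (tconj Φ V) a j k) = ∑ t, ∑ c, normSq (slice Φ V t j c) := by
  simp_rw [← sum_normSq_slice_apply hΦ, slice_tprod hΦ, slice_tconj hΦ]
  rw [Finset.sum_comm]
  refine Finset.sum_congr rfl fun t _ => ?_
  simp [sum_normSq_mul_apply_of_conjTranspose_mul_self_eq_one (hU t)]

theorem infty2Norm_le_sqrt_div_min {A : Tensor n1 n2 n3} {ρ : ℝ} (hρ : 0 ≤ ρ)
    (hrow : ∀ i, ∑ b, ∑ k, normSq (A i b k) ≤ ρ / n1)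
    (hcol : ∀ j, ∑ a, ∑ k, normSq (A a j k) ≤ ρ / n2) :
    infty2Norm A ≤ √(ρ / (min n1 n2 : ℝ)) := by
  refine max_le (Real.iSup_le (fun i => Real.sqrt_le_sqrt ?_) (Real.sqrt_nonneg _))
    (Real.iSup_le (fun j => Real.sqrt_le_sqrt ?_) (Real.sqrt_nonneg _))
  · rcases Nat.eq_zero_or_pos n2 with rfl | h2
    · simp only [Finset.univ_eq_empty, Finset.sum_empty]
      positivity
    · exact (hrow i).trans <| div_le_div_of_nonneg_left hρ
        (lt_min (by exact_mod_cast i.pos) (by exact_mod_cast h2)) (min_le_left _ _)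
  · rcases Nat.eq_zero_or_pos n1 with rfl | h1
    · simp only [Finset.univ_eq_empty, Finset.sum_empty]
      positivity
    · exact (hcol j).trans <| div_le_div_of_nonneg_left hρ
        (lt_min (by exact_mod_cast h1) (by exact_mod_cast j.pos)) (min_le_right _ _)

end Tensor

/-- ‖U ⋄ Vᴴ‖_{∞,2} bound. -/
theorem statement7 {n1 n2 n3 r : ℕ} (Φ : Matrix (Fin n3) (Fin n3) ℂ)
    (hΦ : Φ ∈ Matrix.unitaryGroup (Fin n3) ℂ)
    (Z : Tensor n1 n2 n3) (U : Tensor n1 r n3) (S : Tensor r r n3) (V : Tensor n2 r n3)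
    (hSVD : SkinnySVD Φ Z r U S V)
    (μ : ℝ) (hμ : 1 ≤ μ) (hinc : Incoherent Φ Z U V μ) :
    infty2Norm (tprod Φ U (tconj Φ V))
      ≤ Real.sqrt (μ * (∑ t, ((slice Φ Z t).rank : ℝ)) / (min n1 n2 : ℝ)) := by
  have hρ : 0 ≤ μ * ∑ t, ((slice Φ Z t).rank : ℝ) :=
    mul_nonneg (by linarith) (by positivity)
  refine infty2Norm_le_sqrt_div_min hρ (fun i => ?_) (fun j => ?_)
  · rw [sum_normSq_tprod_tconj_row hΦ U hSVD.V_orth]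
    exact sum_normSq_slice_row_le_of_incoherent hρ hΦ hinc.1 i
  · rw [sum_normSq_tprod_tconj_col hΦ hSVD.U_orth]
    exact sum_normSq_slice_row_le_of_incoherent hρ hΦ hinc.2 j
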